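/- Assume WRP(ω₂). Then WCC⁺_cof holds: for every function F : ω₂^{<ω} → ω₂ there exists a function G : ω₂^{<ω} → ω₂ such that for every countable X ⊆ ω₂ closed under G and every ordinal α < ω₂ there is a countable Y ⊆ ω₂ with X ⊊ Y, sup Y > α, X ∩ ω₁ = Y ∩ ω₁, and Y closed under F. -/

import Mathlib

noncomputable section

open Cardinal

/-- The first uncountable cardinal, as an ordinal. -/
def omega1 : Ordinal.{0} := (aleph 1).ord

/-- The second uncountable cardinal, as an ordinal. -/
def omega2 : Ordinal.{0} := (aleph 2).ord

/-- `X` is closed under `f : A^{<ω} → A` (modelled on all finite sequences of ordinals):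
`f s ∈ X` for every finite sequence `s` of elements of `X`. -/
def ClosedUnder (f : List Ordinal.{0} → Ordinal) (X : Set Ordinal.{0}) : Prop :=
  ∀ s : List Ordinal.{0}, (∀ x ∈ s, x ∈ X) → f s ∈ X

/-- `f` maps finite sequences of ordinals below `A` to ordinals below `A`,
i.e. `f` codes a function `A^{<ω} → A`. -/
def IntoBelow (A : Ordinal.{0}) (f : List Ordinal.{0} → Ordinal) : Prop :=
  ∀ s : List Ordinal.{0}, (∀ x ∈ s, x < A) → f s < A

/-- `S` is stationary in `[A]^ω`: for every `f : A^{<ω} → A` there is a countable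
`X ⊆ A` closed under `f` with `X ∈ S`. -/
def StationaryIn (A : Ordinal.{0}) (S : Set (Set Ordinal.{0})) : Prop :=
  ∀ f : List Ordinal.{0} → Ordinal, IntoBelow A f →
    ∃ X : Set Ordinal.{0}, X.Countable ∧ (∀ x ∈ X, x < A) ∧ ClosedUnder f X ∧ X ∈ S

/-- The weak reflection principle `WRP(ω₂)`: every stationary `S ⊆ [ω₂]^ω` reflects
to `[λ]^ω` for some `ω₁ ≤ λ < ω₂`. -/
def WRP2 : Prop :=
  ∀ S : Set (Set Ordinal.{0}),
    (∀ X ∈ S, X.Countable ∧ ∀ x ∈ X, x < omega2) →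
    StationaryIn omega2 S →
    ∃ lam : Ordinal.{0}, omega1 ≤ lam ∧ lam < omega2 ∧
      StationaryIn lam {X | X ∈ S ∧ ∀ x ∈ X, x < lam}

/-- `C` is a club subset of `ω₁`: a set of ordinals below `ω₁`, unbounded in `ω₁`,
and closed under suprema of its nonempty subsets that are bounded below `ω₁`. -/
def ClubInOmega1 (C : Set Ordinal.{0}) : Prop :=
  (∀ o ∈ C, o < omega1) ∧
  (∀ a < omega1, ∃ b ∈ C, a < b) ∧
  (∀ D : Set Ordinal.{0}, D ⊆ C → D.Nonempty → (∃ b < omega1, ∀ x ∈ D, x ≤ b) → sSup D ∈ C)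

/-- `T` is stationary in `ω₁`: `T ⊆ ω₁` meets every club subset of `ω₁`. -/
def StationaryInOmega1 (T : Set Ordinal.{0}) : Prop :=
  (∀ o ∈ T, o < omega1) ∧ ∀ C : Set Ordinal.{0}, ClubInOmega1 C → (T ∩ C).Nonempty

/-- `clf f Z`: the smallest set of ordinals containing `Z` and closed under `f`. -/
def clf (f : List Ordinal.{0} → Ordinal) (Z : Set Ordinal.{0}) : Set Ordinal.{0} :=
  ⋂₀ {W : Set Ordinal.{0} | Z ⊆ W ∧ ClosedUnder f W}

end


/-!
Call a countable `X ⊆ ω₂` bad for `F` if above some `a < ω₂` no `ξ` has the property that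
the `F`-closure of `X ∪ {ξ}` adds no new countable ordinals. If the bad sets are
nonstationary, a function `G` witnessing this gives `WCC⁺_cof`, with `Y` the closure of
`X ∪ {ξ}`. Otherwise `WRP(ω₂)` reflects them to some `ω₁ ≤ λ < ω₂`. Filter `λ` by an injection
into `ω₁` as an `ω₁`-chain of countable sets `Z_δ`; as there are only `ℵ₁` of them, one `ξ < ω₂`
lies above all their badness bounds. A single `f : λ^{<ω} → λ` codes both the chain and the
countable sets `clf F (s ∪ {ξ}) ∩ ω₁`, so a bad `X` closed under `f` is some `Z_δ` whose
extension by `ξ` adds no new countable ordinals, a contradiction.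
-/

open Cardinal Set

section Closure

variable (f : List Ordinal.{0} → Ordinal.{0})

theorem subset_clf (Z : Set Ordinal.{0}) : Z ⊆ clf f Z :=
  subset_sInter fun _ hW => hW.1

theorem closedUnder_clf (Z : Set Ordinal.{0}) : ClosedUnder f (clf f Z) :=
  fun s hs _ hW => hW.2 s fun x hx => hs x hx _ hW

theorem clf_subset {Z W : Set Ordinal.{0}} (hZW : Z ⊆ W) (hW : ClosedUnder f W) : clf f Z ⊆ W :=
  sInter_subset_of_mem ⟨hZW, hW⟩

theorem clf_mono : Monotone (clf f) :=
  fun _ Z' hZ => clf_subset f (hZ.trans (subset_clf f Z')) (closedUnder_clf f Z')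

theorem countable_setOf_list_mem {S : Set Ordinal.{0}} (hS : S.Countable) :
    {s : List Ordinal.{0} | ∀ x ∈ s, x ∈ S}.Countable := by
  have := hS.to_subtype
  rw [← range_list_map_coe]
  exact countable_range _

theorem countable_clf {Z : Set Ordinal.{0}} (hZ : Z.Countable) : (clf f Z).Countable := by
  let stage : ℕ → Set Ordinal.{0} :=
    fun n => Nat.rec Z (fun _ S => S ∪ f '' {s | ∀ x ∈ s, x ∈ S}) n
  have hmono : Monotone stage := monotone_nat_of_le_succ fun _ => subset_union_left
  have hcount : ∀ n, (stage n).Countable := by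
    intro n
    induction n with
    | zero => exact hZ
    | succ n ih => exact ih.union ((countable_setOf_list_mem ih).image f)
  refine (countable_iUnion hcount).mono (clf_subset f (subset_iUnion stage 0) ?_)
  intro s hs
  obtain ⟨n, hn⟩ := hmono.directed_le.exists_mem_subset_of_finset_subset_biUnion
    (s := s.toFinset) fun x hx => hs x (List.mem_toFinset.1 hx)
  exact mem_iUnion.2 ⟨n + 1, Or.inr ⟨s, fun x hx => hn (List.mem_toFinset.2 hx), rfl⟩⟩

theorem exists_list_mem_clf_union {W Z : Set Ordinal.{0}} {y : Ordinal.{0}}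
    (hy : y ∈ clf f (W ∪ Z)) :
    ∃ s : List Ordinal.{0}, (∀ x ∈ s, x ∈ Z) ∧ y ∈ clf f (W ∪ {x | x ∈ s}) := by
  let U := {y | ∃ s : List Ordinal.{0}, (∀ x ∈ s, x ∈ Z) ∧ y ∈ clf f (W ∪ {x | x ∈ s})}
  have hcover : ∀ t : List Ordinal.{0}, (∀ y ∈ t, y ∈ U) →
      ∃ s : List Ordinal.{0}, (∀ x ∈ s, x ∈ Z) ∧ ∀ y ∈ t, y ∈ clf f (W ∪ {x | x ∈ s}) := by
    intro t ht
    induction t with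
    | nil => exact ⟨[], by simp, by simp⟩
    | cons a t ih =>
      obtain ⟨sa, hsa, ha⟩ := ht a List.mem_cons_self
      obtain ⟨st, hst, htt⟩ := ih fun y hy => ht y (List.mem_cons_of_mem a hy)
      have hmono : ∀ s ⊆ sa ++ st, clf f (W ∪ {x | x ∈ s}) ⊆ clf f (W ∪ {x | x ∈ sa ++ st}) :=
        fun s hs => clf_mono f (union_subset_union_right W fun x hx => hs hx)
      refine ⟨sa ++ st, fun x hx => ?_, fun y hy => ?_⟩
      · rcases List.mem_append.1 hx with hx | hx
        exacts [hsa x hx, hst x hx]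
      · rcases List.mem_cons.1 hy with rfl | hy
        exacts [hmono sa (List.subset_append_left _ _) ha,
          hmono st (List.subset_append_right _ _) (htt y hy)]
  refine clf_subset f (W := U) ?_ (fun t ht => ?_) hy
  · rintro y (hy | hy)
    · exact ⟨[], by simp, subset_clf f _ (Or.inl hy)⟩
    · exact ⟨[y], by simpa using hy, subset_clf f _ (Or.inr (List.mem_singleton_self y))⟩
  · obtain ⟨s, hs, hts⟩ := hcover t ht
    exact ⟨s, hs, closedUnder_clf f _ t hts⟩

end Closure

theorem sSup_add_one_lt_ord {c : Cardinal.{0}} (hc : c.IsRegular) {S : Set Ordinal.{0}}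
    (hS : #S < lift.{1} c) (hlt : ∀ o ∈ S, o < c.ord) : sSup ((· + 1) '' S) < c.ord :=
  Ordinal.sSup_add_one_lt_of_lt_cof (by rwa [← Ordinal.lift_cof, hc.cof_ord]) hlt

theorem exists_lt_ord_forall_lt {c : Cardinal.{0}} (hc : c.IsRegular) {S : Set Ordinal.{0}}
    (hS : #S < lift.{1} c) (hlt : ∀ o ∈ S, o < c.ord) : ∃ b < c.ord, ∀ o ∈ S, o < b := by
  refine ⟨_, sSup_add_one_lt_ord hc hS hlt, fun o ho => (Order.lt_add_one_iff.2 le_rfl).trans_le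
    (le_csSup ⟨c.ord, ?_⟩ (mem_image_of_mem _ ho))⟩
  rintro _ ⟨o', ho', rfl⟩
  exact Order.add_one_le_of_lt (hlt o' ho')

theorem isRegular_aleph_two : (aleph 2).IsRegular := by
  simpa [one_add_one_eq_two] using isRegular_aleph_add_one 1

theorem exists_lt_omega2_forall_lt {S : Set Ordinal.{0}} (hS : #S ≤ lift.{1, 0} ℵ₁)
    (hlt : ∀ o ∈ S, o < omega2) : ∃ b < omega2, ∀ o ∈ S, o < b :=
  exists_lt_ord_forall_lt isRegular_aleph_two
    (hS.trans_lt (lift_lt.2 (aleph_lt_aleph.2 one_lt_two))) hlt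

theorem omega0_le_omega1 : Ordinal.omega0 ≤ omega1 := by
  rw [omega1, ord_aleph]
  exact Ordinal.omega0_lt_omega_one.le

theorem countable_Iic_of_lt_omega1 {o : Ordinal.{0}} (ho : o < omega1) : (Iic o).Countable := by
  rw [← Iio_insert, countable_insert, ← le_aleph0_iff_set_countable, mk_Iio_ordinal,
    ← lift_aleph0.{1, 0}, lift_le, ← lt_aleph_one_iff]
  exact lt_ord.1 ho

theorem exists_injOn_lt_omega1 {lam : Ordinal.{0}} (hlam : lam < omega2) :
    ∃ h : Ordinal.{0} → Ordinal.{0}, (∀ x, h x < omega1) ∧ InjOn h (Iio lam) := by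
  have hcard : lam.card ≤ ℵ₁ := by
    rw [← Order.lt_succ_iff, succ_aleph, one_add_one_eq_two]
    exact lt_ord.1 hlam
  obtain ⟨e⟩ : Nonempty (Iio lam ↪ Iio omega1) := by
    rw [← Cardinal.le_def, mk_Iio_ordinal, mk_Iio_ordinal, omega1, card_ord]
    exact lift_le.2 hcard
  refine ⟨fun x => if hx : x < lam then e ⟨x, hx⟩ else 0, fun x => ?_, fun x hx y hy hxy => ?_⟩
  · dsimp only
    split_ifs
    exacts [(e _).2, lt_ord.2 (by simp)]
  · simp only [dif_pos (show x < lam from hx), dif_pos (show y < lam from hy)] at hxy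
    exact congrArg Subtype.val (e.injective (Subtype.ext hxy))

theorem exists_intoBelow_forall_subset_of_closedUnder {lam : Ordinal.{0}}
    (hlam : Ordinal.omega0 ≤ lam) (K : List Ordinal.{0} → Set Ordinal.{0})
    (hK : ∀ s, (K s).Countable) (hKlt : ∀ s, ∀ y ∈ K s, y < lam) :
    ∃ f : List Ordinal.{0} → Ordinal.{0}, IntoBelow lam f ∧
      ∀ X, ClosedUnder f X → ∀ s : List Ordinal.{0}, (∀ x ∈ s, x ∈ X) → K s ⊆ X := by
  choose g hg using fun s => ((hK s).insert 0).exists_eq_range (insert_nonempty 0 (K s))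
  let n : Ordinal.{0} → ℕ := Function.invFun Nat.cast
  have hn (k : ℕ) : n k = k := Function.leftInverse_invFun Nat.cast_injective k
  -- `f (n :: _ :: s)` is the `n`-th element of `K s`; `f []` and `f [n]` generate the naturals.
  let f : List Ordinal.{0} → Ordinal.{0}
    | [] => 0
    | [y] => (n y + 1 : ℕ)
    | y :: _ :: s => g s (n y)
  have hlam0 : (0 : Ordinal) < lam := Ordinal.omega0_pos.trans_le hlam
  refine ⟨f, ?_, fun X hX s hs y hy => ?_⟩
  · rintro (_ | ⟨y, _ | ⟨z, s⟩⟩) -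
    · exact hlam0
    · exact (Ordinal.natCast_lt_omega0 _).trans_le hlam
    · show g s (n y) < lam
      rcases (hg s ▸ mem_range_self _ : g s (n y) ∈ insert 0 (K s)) with h | h
      exacts [h ▸ hlam0, hKlt s _ h]
  have hnat (k : ℕ) : (k : Ordinal) ∈ X := by
    induction k with
    | zero => simpa using hX [] (by simp)
    | succ k ih => simpa [f, hn] using hX [(k : Ordinal)] (by simpa using ih)
  obtain ⟨k, rfl⟩ : y ∈ range (g s) := hg s ▸ mem_insert_of_mem 0 hy
  have hlist : ∀ x ∈ (k : Ordinal) :: 0 :: s, x ∈ X := by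
    simpa using ⟨hnat k, by simpa using hnat 0, hs⟩
  simpa [f, hn] using hX _ hlist

theorem exists_lt_omega1_eq_inter_preimage_Iio {lam : Ordinal.{0}} {h : Ordinal.{0} → Ordinal.{0}}
    (hh : ∀ x, h x < omega1) {X : Set Ordinal.{0}} (hXc : X.Countable)
    (hXlam : ∀ x ∈ X, x < lam) (hXdown : ∀ x ∈ X, Iio lam ∩ h ⁻¹' Iic (h x) ⊆ X) :
    ∃ δ < omega1, X = Iio lam ∩ h ⁻¹' Iio δ := by
  have hbdd : BddAbove ((· + 1) '' (h '' X)) := by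
    refine ⟨omega1, ?_⟩
    rintro _ ⟨_, ⟨x, -, rfl⟩, rfl⟩
    exact Order.add_one_le_of_lt (hh x)
  refine ⟨sSup ((· + 1) '' (h '' X)), sSup_add_one_lt_ord isRegular_aleph_one ?_ ?_, ?_⟩
  · exact (hXc.image h).le_aleph0.trans_lt (by simp)
  · rintro _ ⟨x, -, rfl⟩
    exact hh x
  ext y
  constructor
  · intro hy
    exact ⟨hXlam y hy, (Order.lt_add_one_iff.2 le_rfl).trans_le
      (le_csSup hbdd ⟨h y, ⟨y, hy, rfl⟩, rfl⟩)⟩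
  · rintro ⟨hy, hyδ : h y < _⟩
    obtain ⟨_, ⟨_, ⟨x, hx, rfl⟩, rfl⟩, hlt⟩ := exists_lt_of_lt_csSup' hyδ
    exact hXdown x hx ⟨hy, Order.lt_add_one_iff.1 hlt⟩

def ExtendsCofinally (F : List Ordinal.{0} → Ordinal.{0}) (X : Set Ordinal.{0}) : Prop :=
  ∀ a < omega2, ∃ ξ, a < ξ ∧ ξ < omega2 ∧ clf F (insert ξ X) ∩ Iio omega1 ⊆ X

def badSet (F : List Ordinal.{0} → Ordinal.{0}) : Set (Set Ordinal.{0}) :=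
  {X | X.Countable ∧ (∀ x ∈ X, x < omega2) ∧ ¬ ExtendsCofinally F X}

theorem ExtendsCofinally.exists_superset {F : List Ordinal.{0} → Ordinal.{0}}
    (hF : IntoBelow omega2 F) {X : Set Ordinal.{0}} (hX : ExtendsCofinally F X)
    (hXc : X.Countable) (hXlt : ∀ x ∈ X, x < omega2) {α : Ordinal.{0}} (hα : α < omega2) :
    ∃ Y : Set Ordinal.{0}, Y.Countable ∧ (∀ y ∈ Y, y < omega2) ∧ X ⊂ Y ∧ α < sSup Y ∧
      X ∩ {o | o < omega1} = Y ∩ {o | o < omega1} ∧ ClosedUnder F Y := by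
  obtain ⟨b, hb, hαXb⟩ := exists_lt_omega2_forall_lt
    ((hXc.insert α).le_aleph0.trans (by simp))
    (forall_mem_insert.2 ⟨hα, hXlt⟩)
  obtain ⟨ξ, hbξ, hξ, htrace⟩ := hX b hb
  have hXY : insert ξ X ⊆ clf F (insert ξ X) := subset_clf F _
  have hYlt : clf F (insert ξ X) ⊆ Iio omega2 :=
    clf_subset F (insert_subset hξ hXlt) hF
  have hξX : ξ ∉ X := fun h => (hαXb ξ (mem_insert_of_mem α h)).asymm hbξ
  refine ⟨clf F (insert ξ X), countable_clf F (hXc.insert ξ), hYlt,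
    (ssubset_iff_of_subset ((subset_insert ξ X).trans hXY)).2 ⟨ξ, hXY (mem_insert ξ X), hξX⟩,
    ?_, ?_, closedUnder_clf F _⟩
  · exact (hαXb α (mem_insert α X)).trans <| hbξ.trans_le <|
      le_csSup ⟨omega2, fun y hy => (hYlt hy).le⟩ (hXY (mem_insert ξ X))
  · exact Subset.antisymm (inter_subset_inter_left _ ((subset_insert ξ X).trans hXY))
      fun y hy => ⟨htrace hy, hy.2⟩

theorem exists_lt_omega2_forall_not_clf_insert_subset (F : List Ordinal.{0} → Ordinal.{0})
    (Z : Ordinal.{0} → Set Ordinal.{0}) :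
    ∃ ξ < omega2, ∀ δ < omega1, ¬ ExtendsCofinally F (Z δ) →
      ¬ clf F (insert ξ (Z δ)) ∩ Iio omega1 ⊆ Z δ := by
  have hbound (δ : Ordinal.{0}) : ∃ a < omega2, ¬ ExtendsCofinally F (Z δ) →
      ∀ ξ, a < ξ → ξ < omega2 → ¬ clf F (insert ξ (Z δ)) ∩ Iio omega1 ⊆ Z δ := by
    by_cases hδ : ExtendsCofinally F (Z δ)
    · exact ⟨0, lt_ord.2 (by simp [aleph_pos]), absurd hδ⟩
    · simp only [ExtendsCofinally, not_forall, not_exists, not_and] at hδ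
      obtain ⟨a, ha, hδ⟩ := hδ
      exact ⟨a, ha, fun _ => hδ⟩
  choose A hA hAbad using hbound
  obtain ⟨ξ, hξ, hAξ⟩ := exists_lt_omega2_forall_lt (S := A '' Iio omega1)
    (mk_image_le.trans (by rw [mk_Iio_ordinal, omega1, card_ord]))
    (forall_mem_image.2 fun δ _ => hA δ)
  exact ⟨ξ, hξ, fun δ hδ hbad => hAbad δ hbad ξ (hAξ _ (mem_image_of_mem A hδ)) hξ⟩

theorem not_stationaryIn_badSet_inter {F : List Ordinal.{0} → Ordinal.{0}} {lam : Ordinal.{0}}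
    (h1 : omega1 ≤ lam) (h2 : lam < omega2) :
    ¬ StationaryIn lam {X | X ∈ badSet F ∧ ∀ x ∈ X, x < lam} := by
  intro hstat
  obtain ⟨h, hh, hinj⟩ := exists_injOn_lt_omega1 h2
  obtain ⟨ξ, hξ, hξbad⟩ :=
    exists_lt_omega2_forall_not_clf_insert_subset F fun δ => Iio lam ∩ h ⁻¹' Iio δ
  let K (s : List Ordinal.{0}) : Set Ordinal.{0} :=
    (clf F ({ξ} ∪ {x | x ∈ s}) ∩ Iio omega1) ∪ ⋃ x ∈ s, Iio lam ∩ h ⁻¹' Iic (h x)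
  have hKc (s : List Ordinal.{0}) : (K s).Countable := by
    refine ((countable_clf F ((List.finite_toSet s).countable.insert ξ)).mono
      inter_subset_left).union ((List.finite_toSet s).countable.biUnion fun x _ => ?_)
    exact MapsTo.countable_of_injOn (f := h) (fun y hy => hy.2) (hinj.mono inter_subset_left)
      (countable_Iic_of_lt_omega1 (hh x))
  have hKlt (s : List Ordinal.{0}) : ∀ y ∈ K s, y < lam := by
    rintro y (hy | hy)
    · exact hy.2.trans_le h1
    · obtain ⟨x, -, hy⟩ := mem_iUnion₂.1 hy
      exact hy.1
  obtain ⟨f, hf, hfK⟩ := exists_intoBelow_forall_subset_of_closedUnder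
    (omega0_le_omega1.trans h1) K hKc hKlt
  obtain ⟨X, hXc, hXlam, hXf, ⟨-, -, hXbad⟩, -⟩ := hstat f hf
  obtain ⟨δ, hδ, rfl⟩ := exists_lt_omega1_eq_inter_preimage_Iio hh hXc hXlam
    fun x hx y hy => hfK _ hXf [x] (by simpa using hx)
      (Or.inr (mem_iUnion₂.2 ⟨x, List.mem_singleton_self x, hy⟩))
  refine hξbad δ hδ hXbad fun y ⟨hy, hy1⟩ => ?_
  obtain ⟨s, hs, hys⟩ := exists_list_mem_clf_union F (by rwa [← singleton_union] at hy)
  exact hfK _ hXf s hs (Or.inl ⟨hys, hy1⟩)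

/-- `WRP(ω₂)` implies the cofinal version `WCC⁺_cof`. -/
theorem wrp_implies_wcc_plus_cof (hWRP : WRP2) :
    ∀ F : List Ordinal.{0} → Ordinal, IntoBelow omega2 F →
      ∃ G : List Ordinal.{0} → Ordinal, IntoBelow omega2 G ∧
        ∀ X : Set Ordinal.{0}, X.Countable → (∀ x ∈ X, x < omega2) → ClosedUnder G X →
          ∀ α < omega2,
            ∃ Y : Set Ordinal.{0}, Y.Countable ∧ (∀ y ∈ Y, y < omega2) ∧
              X ⊂ Y ∧
              α < sSup Y ∧
              X ∩ {o | o < omega1} = Y ∩ {o | o < omega1} ∧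
              ClosedUnder F Y := by
  intro F hF
  have hnotstat : ¬ StationaryIn omega2 (badSet F) := fun hstat => by
    obtain ⟨lam, h1, h2, hlam⟩ := hWRP (badSet F) (fun X hX => ⟨hX.1, hX.2.1⟩) hstat
    exact not_stationaryIn_badSet_inter h1 h2 hlam
  simp only [StationaryIn, not_forall, not_exists, not_and] at hnotstat
  obtain ⟨G, hG, hGgood⟩ := hnotstat
  refine ⟨G, hG, fun X hXc hXlt hXG α hα => ?_⟩
  have hX : ExtendsCofinally F X := not_not.1 fun hbad => hGgood X hXc hXlt hXG ⟨hXc, hXlt, hbad⟩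
  exact hX.exists_superset hF hXc hXlt hα
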